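/- arXiv:2002.03352 — 2 statements merged into one kernel-verified Lean document; each statement's English description precedes it below -/
import Mathlib

section
/- Let M₁ = (N, I₁) be a k₁-set system and M₂ = (N, I₂) be a k₂-set system over the same ground set N. Then M = (N, I₁ ∩ I₂) is a (k₁ + k₂)-set system. -/
/-- A set system: contains `∅` and is downward closed. -/
def DownwardClosed {α : Type*} (I : Finset α → Prop) : Prop :=
  ∀ ⦃A B : Finset α⦄, A ⊆ B → I B → I A

def IsSetSystem {α : Type*} (I : Finset α → Prop) : Prop :=
  I ∅ ∧ DownwardClosed I

/-- `B` is a base of `F`: an independent subset of `F` that is maximal. -/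
def IsBase {α : Type*} [DecidableEq α] (I : Finset α → Prop) (F B : Finset α) : Prop :=
  B ⊆ F ∧ I B ∧ ∀ u ∈ F, u ∉ B → ¬ I (insert u B)

/-- `k`-set system: any two bases of any `F` have size ratio at most `k`. -/
def IsKSetSystem {α : Type*} [DecidableEq α] (I : Finset α → Prop) (k : ℕ) : Prop :=
  IsSetSystem I ∧
    ∀ F B₁ B₂ : Finset α, IsBase I F B₁ → IsBase I F B₂ → B₁.card ≤ k * B₂.card

/-- `k`-extendible system. -/
def IsKExtendible {α : Type*} [DecidableEq α] (I : Finset α → Prop) (k : ℕ) : Prop :=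
  IsSetSystem I ∧
    ∀ C D : Finset α, ∀ u : α, I C → I D → C ⊆ D → u ∉ D → I (insert u C) →
      ∃ Y : Finset α, Y ⊆ D \ C ∧ Y.card ≤ k ∧ I (insert u (D \ Y))

/-!
Let `B₁`, `B₂` be common bases of `F`. Each `u ∈ B₁ \ B₂` cannot be added to `B₂` in `I₁` or
(failing that, by maximality of `B₂`) in `I₂`; this splits `B₁ \ B₂` into `X₁` and `X₂`.
In `Iᵢ`, `B₂` is a base of `B₂ ∪ Xᵢ`, while `Xᵢ ∪ (B₁ ∩ B₂) ⊆ B₁` is independent there, so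
`|Xᵢ| + |B₁ ∩ B₂| ≤ kᵢ |B₂|`. Adding the two bounds gives `|B₁| ≤ (k₁ + k₂) |B₂|`.
-/

open Finset

theorem IsSetSystem.inter {α : Type*} {I₁ I₂ : Finset α → Prop} (h₁ : IsSetSystem I₁)
    (h₂ : IsSetSystem I₂) : IsSetSystem fun S => I₁ S ∧ I₂ S :=
  ⟨⟨h₁.1, h₂.1⟩, fun _ _ hAB hB => ⟨h₁.2 hAB hB.1, h₂.2 hAB hB.2⟩⟩

section SetSystem

variable {α : Type*} [DecidableEq α] {I : Finset α → Prop} {k : ℕ} {A B B₁ B₂ F X : Finset α}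

theorem exists_isBase_superset (hA : I A) (hAF : A ⊆ F) : ∃ B, A ⊆ B ∧ IsBase I F B := by
  classical
  obtain ⟨B, hAB, hmax⟩ :=
    (F.powerset.filter fun B => A ⊆ B ∧ I B).exists_le_maximal (a := A) (by simp [hAF, hA])
  simp only [mem_filter, mem_powerset] at hmax
  obtain ⟨⟨hBF, -, hB⟩, hmax⟩ := hmax
  refine ⟨B, hAB, hBF, hB, fun u hu huB hins => huB ?_⟩
  exact hmax ⟨insert_subset hu hBF, hAB.trans (subset_insert u B), hins⟩ (subset_insert u B)
    (mem_insert_self u B)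

theorem isBase_union (hB : I B) (hX : ∀ u ∈ X, ¬ I (insert u B)) : IsBase I (B ∪ X) B :=
  ⟨subset_union_left, hB, fun u hu huB => hX u ((mem_union.mp hu).resolve_left huB)⟩

theorem IsKSetSystem.card_le_of_isBase (hI : IsKSetSystem I k) (hB : IsBase I F B) (hA : I A)
    (hAF : A ⊆ F) : #A ≤ k * #B := by
  obtain ⟨C, hAC, hC⟩ := exists_isBase_superset hA hAF
  exact (card_le_card hAC).trans (hI.2 F C B hC hB)

theorem IsKSetSystem.card_add_card_inter_le (hI : IsKSetSystem I k) (hB₁ : I B₁) (hB₂ : I B₂)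
    (hX : X ⊆ B₁ \ B₂) (hXB₂ : ∀ u ∈ X, ¬ I (insert u B₂)) :
    #X + #(B₁ ∩ B₂) ≤ k * #B₂ := by
  have hXB₁ : X ⊆ B₁ := hX.trans sdiff_subset
  have hdisj : Disjoint X (B₁ ∩ B₂) :=
    disjoint_of_subset_left hX (disjoint_sdiff_inter B₁ B₂)
  rw [← card_union_of_disjoint hdisj]
  refine hI.card_le_of_isBase (isBase_union hB₂ hXB₂)
    (hI.1.2 (union_subset hXB₁ inter_subset_left) hB₁) ?_
  exact union_subset subset_union_right (inter_subset_right.trans subset_union_left)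

end SetSystem

/-- The intersection of a k₁-set system and a k₂-set system is a (k₁+k₂)-set system. -/
theorem intersection_kSetSystem {α : Type*} [DecidableEq α]
    (I₁ I₂ : Finset α → Prop) (k₁ k₂ : ℕ)
    (h₁ : IsKSetSystem I₁ k₁) (h₂ : IsKSetSystem I₂ k₂) :
    IsKSetSystem (fun S => I₁ S ∧ I₂ S) (k₁ + k₂) := by
  refine ⟨h₁.1.inter h₂.1, fun F B₁ B₂ hB₁ hB₂ => ?_⟩
  classical
  set X₁ := (B₁ \ B₂).filter fun u => ¬ I₁ (insert u B₂)
  set X₂ := (B₁ \ B₂).filter fun u => I₁ (insert u B₂)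
  have hX₁ : #X₁ + #(B₁ ∩ B₂) ≤ k₁ * #B₂ :=
    h₁.card_add_card_inter_le hB₁.2.1.1 hB₂.2.1.1 (filter_subset _ _)
      fun u hu => (mem_filter.mp hu).2
  have hX₂ : #X₂ + #(B₁ ∩ B₂) ≤ k₂ * #B₂ := by
    refine h₂.card_add_card_inter_le hB₁.2.1.2 hB₂.2.1.2 (filter_subset _ _) fun u hu hI₂ => ?_
    obtain ⟨hu, hI₁⟩ := mem_filter.mp hu
    exact hB₂.2.2 u (hB₁.1 (mem_sdiff.mp hu).1) (mem_sdiff.mp hu).2 ⟨hI₁, hI₂⟩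
  have hsplit : #X₂ + #X₁ + #(B₁ ∩ B₂) = #B₁ := by
    rw [card_filter_add_card_filter_not, card_sdiff_add_card_inter]
  rw [add_mul]
  omega
end

section
/- Given a cost function c : N → ℝ₊ with c_min = min over N of c and c_max = max over N of c, both positive, and a budget b ≥ c_max, the system M = (N, I) with I = {S ⊆ N : Σ_{u∈S} c(u) ≤ b} is a k-extendible system for k = ⌈c_max / c_min⌉. -/
/-!
Removing any `k` elements of `D \ C` frees at least `k * c_min ≥ c_max` of budget, which pays for
the new element `u`; if `D \ C` has at most `k` elements, removing all of it leaves `C ∪ {u}`,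
which is feasible by assumption.
-/

open Finset

theorem exists_subset_card_le_and_eq_or_le_sum {α : Type*} (s : Finset α) (c : α → ℝ) (k : ℕ)
    {m : ℝ} (hm : ∀ v ∈ s, m ≤ c v) :
    ∃ Y ⊆ s, #Y ≤ k ∧ (Y = s ∨ k * m ≤ ∑ v ∈ Y, c v) := by
  by_cases hs : #s ≤ k
  · exact ⟨s, subset_rfl, hs, Or.inl rfl⟩
  obtain ⟨Y, hYs, hY⟩ := exists_subset_card_eq (not_le.mp hs).le
  refine ⟨Y, hYs, hY.le, Or.inr ?_⟩
  simpa [hY] using card_nsmul_le_sum Y c m fun v hv => hm v (hYs hv)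

section Knapsack

variable {α : Type*}

def knapsack (N : Finset α) (c : α → ℝ) (b : ℝ) (S : Finset α) : Prop :=
  S ⊆ N ∧ ∑ u ∈ S, c u ≤ b

variable {N : Finset α} {c : α → ℝ} {b : ℝ}

theorem knapsack_downwardClosed (hc : ∀ u ∈ N, 0 ≤ c u) : DownwardClosed (knapsack N c b) :=
  fun _ _ hAB hB => ⟨hAB.trans hB.1,
    (sum_le_sum_of_subset_of_nonneg hAB fun v hv _ => hc v (hB.1 hv)).trans hB.2⟩

theorem knapsack_isSetSystem (hc : ∀ u ∈ N, 0 ≤ c u) (hb : 0 ≤ b) :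
    IsSetSystem (knapsack N c b) :=
  ⟨⟨empty_subset N, by simpa using hb⟩, knapsack_downwardClosed hc⟩

theorem knapsack_isKExtendible [DecidableEq α] (k : ℕ) (m : ℝ) (hc : ∀ u ∈ N, 0 ≤ c u)
    (hb : 0 ≤ b) (hm : ∀ v ∈ N, m ≤ c v) (hk : ∀ u ∈ N, c u ≤ k * m) :
    IsKExtendible (knapsack N c b) k := by
  refine ⟨knapsack_isSetSystem hc hb, fun C D u _ hD hCD huD huC => ?_⟩
  have huN : u ∈ N := huC.1 (mem_insert_self u C)
  obtain ⟨Y, hYDC, hYk, hY⟩ :=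
    exists_subset_card_le_and_eq_or_le_sum (D \ C) c k fun v hv => hm v (hD.1 (sdiff_subset hv))
  refine ⟨Y, hYDC, hYk, ?_⟩
  rcases hY with rfl | hfreed
  · rwa [Finset.sdiff_sdiff_eq_self hCD]
  have hYD : Y ⊆ D := hYDC.trans sdiff_subset
  refine ⟨insert_subset huN (sdiff_subset.trans hD.1), ?_⟩
  calc ∑ v ∈ insert u (D \ Y), c v = c u + (∑ v ∈ D, c v - ∑ v ∈ Y, c v) := by
        rw [sum_insert fun h => huD (mem_sdiff.mp h).1, sum_sdiff_eq_sub hYD]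
    _ ≤ b := by linarith [hk u huN, hD.2]

end Knapsack

/-- A single knapsack constraint with positive costs and budget at least the maximum
cost is a ⌈c_max / c_min⌉-extendible system. -/
theorem knapsack_kExtendible {α : Type*} [DecidableEq α]
    (N : Finset α) (hN : N.Nonempty) (c : α → ℝ)
    (hpos : ∀ u ∈ N, 0 < c u) (b : ℝ) (hb : N.sup' hN c ≤ b) :
    IsKExtendible (fun S : Finset α => S ⊆ N ∧ ∑ u ∈ S, c u ≤ b)
      ⌈N.sup' hN c / N.inf' hN c⌉₊ := by
  have hmin : 0 < N.inf' hN c := (lt_inf'_iff hN).mpr hpos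
  have hmax_le : N.sup' hN c ≤ ⌈N.sup' hN c / N.inf' hN c⌉₊ * N.inf' hN c :=
    (div_le_iff₀ hmin).mp (Nat.le_ceil _)
  obtain ⟨x, hx⟩ := hN
  exact knapsack_isKExtendible _ _ (fun u hu => (hpos u hu).le)
    ((hpos x hx).le.trans ((le_sup' c hx).trans hb)) (fun v hv => inf'_le c hv)
    (fun u hu => (le_sup' c hu).trans hmax_le)
end
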